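/- arXiv:2205.12942 — 4 statements merged into one kernel-verified Lean document; each statement's English description precedes it below -/
import Mathlib

section
/- Let X be a topological space equipped with a reflexive, transitive relation ≤, and assume that for every p ∈ X the closure of J⁺(p) is a future set. Let 𝒰 be a family of open subsets of X and define the black region 𝓑 to be the union of all closed, singularly compact future sets. Then for every p ∈ X: p ∈ 𝓑 if and only if the closure of J⁺(p) is singularly compact. -/
open Set Filter Topology

variable {X : Type*} [TopologicalSpace X]

/-- A closed set `A ⊆ X` is *singularly compact* with respect to a family `𝒰` of open subsets
of `X` if `A \ U` is compact for every `U ∈ 𝒰`. -/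
def SingularlyCompact (𝒰 : Set (Set X)) (A : Set X) : Prop :=
  IsClosed A ∧ ∀ U ∈ 𝒰, IsCompact (A \ U)

/-- `A` is a future set for the causal relation `le`. -/
def IsFutureSet (le : X → X → Prop) (A : Set X) : Prop :=
  ∀ q ∈ A, ∀ r, le q r → r ∈ A

/-- The causal future `J⁺(p)` of a point. -/
def causalFuture (le : X → X → Prop) (p : X) : Set X := {q | le p q}

/-- The black region `𝓑`: the union of all closed, singularly compact future sets. -/
def blackRegion (𝒰 : Set (Set X)) (le : X → X → Prop) : Set X :=
  ⋃₀ {A : Set X | SingularlyCompact 𝒰 A ∧ IsFutureSet le A}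

/-- Provided the closure of each causal future is a future set, a point lies in the black
region iff the closure of its causal future is singularly compact. -/
theorem mem_blackRegion_iff_closure_causalFuture_singularlyCompact
    (𝒰 : Set (Set X)) (h𝒰 : ∀ U ∈ 𝒰, IsOpen U)
    (le : X → X → Prop) (hrefl : ∀ x, le x x)
    (htrans : ∀ x y z, le x y → le y z → le x z)
    (hfut : ∀ p : X, IsFutureSet le (closure (causalFuture le p)))
    (p : X) :
    p ∈ blackRegion 𝒰 le ↔ SingularlyCompact 𝒰 (closure (causalFuture le p)) := by
  constructor
  · rintro ⟨A, ⟨⟨hAc, hAk⟩, hAf⟩, hpA⟩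
    have hsub : closure (causalFuture le p) ⊆ A := by
      apply closure_minimal _ hAc
      intro q hq
      exact hAf p hpA q hq
    refine ⟨isClosed_closure, fun U hU => ?_⟩
    have := hAk U hU
    exact this.of_isClosed_subset (isClosed_closure.sdiff (h𝒰 U hU))
      (diff_subset_diff_left hsub)
  · intro h
    exact ⟨closure (causalFuture le p), ⟨h, hfut p⟩,
      subset_closure (hrefl p)⟩
end

section
/- Let v₀ > 0, a ∈ [0, v₀), let m : ℝ → ℝ be continuously differentiable and nondecreasing, and let r : (a, v₀] → ℝ be differentiable with r(s) > 0 and r′(s) = 1/2 − m(s)/r(s) for all s ∈ (a, v₀]. If r(v₀) ≥ 2·m(v₀), then r(s) ≥ 2·m(s) for all s ∈ (a, v₀]. -/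
open Set Filter Topology

/-!
If `r(s₀) < 2·m(s₀)` for some `s₀`, then the level `r(s₀)` is a barrier on `[s₀, v₀]`: wherever
`r = r(s₀)`, monotonicity of `m` gives `r < 2m`, so `r′ = 1/2 − m/r < 0` there, and `r` can never
climb above `r(s₀)`. Hence `r(v₀) ≤ r(s₀) < 2m(s₀) ≤ 2m(v₀)`, contradicting `r(v₀) ≥ 2m(v₀)`.
-/

lemma le_of_hasDerivWithinAt_neg_at_level {f f' : ℝ → ℝ} {a b c : ℝ}
    (hf : ∀ x ∈ Icc a b, HasDerivWithinAt f (f' x) (Icc a b) x) (ha : f a ≤ c)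
    (hneg : ∀ x ∈ Ico a b, f x = c → f' x < 0) : ∀ x ∈ Icc a b, f x ≤ c := by
  have hcont : ContinuousOn f (Icc a b) := fun x hx => (hf x hx).continuousWithinAt
  have hright : ∀ x ∈ Ico a b, HasDerivWithinAt f (f' x) (Ici x) x := fun x hx =>
    ((hf x (Ico_subset_Icc_self hx)).mono (Icc_subset_Icc_left hx.1)).mono_of_mem_nhdsWithin
      (Icc_mem_nhdsGE hx.2)
  exact fun x hx => image_le_of_deriv_right_lt_deriv_boundary' hcont hright
    (B := fun _ => c) ha continuousOn_const (fun _ _ => hasDerivWithinAt_const _ _ _)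
    hneg hx

lemma half_sub_div_neg_of_lt_two_mul {m r : ℝ} (hr : 0 < r) (h : r < 2 * m) :
    1 / 2 - m / r < 0 := by
  rw [sub_neg, lt_div_iff₀ hr]
  linarith

theorem vaidya_lower_barrier_general (v₀ a : ℝ)
    (m : ℝ → ℝ) (hmono : Monotone m)
    (r : ℝ → ℝ)
    (hpos : ∀ s ∈ Set.Ioc a v₀, 0 < r s)
    (hode : ∀ s ∈ Set.Ioc a v₀,
      HasDerivWithinAt r (1 / 2 - m s / r s) (Set.Ioc a v₀) s)
    (hinit : 2 * m v₀ ≤ r v₀) :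
    ∀ s ∈ Set.Ioc a v₀, 2 * m s ≤ r s := by
  intro s₀ hs₀
  by_contra! htrapped
  have hsub : Icc s₀ v₀ ⊆ Ioc a v₀ := fun t ht => ⟨hs₀.1.trans_le ht.1, ht.2⟩
  have hbarrier : r v₀ ≤ r s₀ :=
    le_of_hasDerivWithinAt_neg_at_level (fun x hx => (hode x (hsub hx)).mono hsub) le_rfl
      (fun x hx hx_eq => half_sub_div_neg_of_lt_two_mul (hpos x (hsub (Ico_subset_Icc_self hx)))
        (by linarith [hmono hx.1]))
      v₀ (right_mem_Icc.2 hs₀.2)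
  linarith [hmono hs₀.2]

/-- Lower barrier (trapping) comparison for the outgoing radial null geodesic ODE
`r′(s) = 1/2 − m(s)/r(s)` in the Vaidya spacetime: if `m` is `C¹` and nondecreasing, `r > 0`
solves the ODE on `(a, v₀]`, and `r(v₀) ≥ 2·m(v₀)`, then `r(s) ≥ 2·m(s)` on `(a, v₀]`. -/
theorem vaidya_lower_barrier (v₀ a : ℝ) (hv₀ : 0 < v₀) (ha : 0 ≤ a) (hav : a < v₀)
    (m : ℝ → ℝ) (hm : ContDiff ℝ 1 m) (hmono : Monotone m)
    (r : ℝ → ℝ)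
    (hpos : ∀ s ∈ Set.Ioc a v₀, 0 < r s)
    (hode : ∀ s ∈ Set.Ioc a v₀,
      HasDerivWithinAt r (1 / 2 - m s / r s) (Set.Ioc a v₀) s)
    (hinit : 2 * m v₀ ≤ r v₀) :
    ∀ s ∈ Set.Ioc a v₀, 2 * m s ≤ r s :=
  vaidya_lower_barrier_general v₀ a m hmono r hpos hode hinit
end

section
/- Let v₀ > 0, a ∈ [0, v₀), let m : ℝ → ℝ be continuously differentiable with m′(s) ≤ 1/16 for all s ∈ (a, v₀), and let r : (a, v₀] → ℝ be differentiable with r(s) > 0 and r′(s) = 1/2 − m(s)/r(s) for all s ∈ (a, v₀]. If r(v₀) ≤ 4·m(v₀), then r(s) ≤ 4·m(s) for all s ∈ (a, v₀]. -/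
open Set Filter

/-!
Let `f = r - 4m`. Wherever `r > 4m` the ODE gives `r' = 1/2 - m/r > 1/4 ≥ 4m'`, so `f` is
increasing on any interval where it is positive. Since `f(v₀) ≤ 0`, no point `s < v₀` can have
`f(s) > 0`: `f` would increase from `f(s)` up to the first zero of `f` to the right of `s`.
-/

theorem nonpos_of_nonpos_right_of_deriv_nonneg_of_pos {f : ℝ → ℝ} {a b : ℝ} (hab : a ≤ b)
    (hf : ContinuousOn f (Icc a b)) (hdiff : DifferentiableOn ℝ f (Ioo a b))
    (hderiv : ∀ x ∈ Ioo a b, 0 < f x → 0 ≤ deriv f x) (hb : f b ≤ 0) : f a ≤ 0 := by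
  have hclosed : IsClosed ({x | f x ≤ 0} ∩ Icc a b) := by
    rw [inter_comm]
    exact hf.preimage_isClosed_of_isClosed isClosed_Icc isClosed_Iic
  refine hclosed.mem_of_ge_of_forall_exists_lt hb hab fun x ⟨hfx, hax, hxb⟩ => ?_
  by_contra hempty
  have hpos : ∀ y ∈ Ico a x, 0 < f y := fun y hy => not_le.1 fun hy' => hempty ⟨y, hy', hy⟩
  have hmono : MonotoneOn f (Icc a x) := by
    refine monotoneOn_of_deriv_nonneg (convex_Icc a x) (hf.mono (Icc_subset_Icc_right hxb))
      (hdiff.mono (by simpa using Ioo_subset_Ioo_right hxb)) fun y hy => ?_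
    rw [interior_Icc] at hy
    exact hderiv y ⟨hy.1, hy.2.trans_le hxb⟩ (hpos y ⟨hy.1.le, hy.2⟩)
  have hfa : f a ≤ 0 := (hmono (left_mem_Icc.2 hax.le) (right_mem_Icc.2 hax.le) hax.le).trans hfx
  exact hfa.not_gt (hpos a (left_mem_Ico.2 hax))

theorem half_sub_div_sub_four_mul_pos {r m m' : ℝ} (hr : 0 < r) (hrm : 4 * m < r)
    (hm' : m' ≤ 1 / 16) :
    0 < 1 / 2 - m / r - 4 * m' := by
  have : m / r < 1 / 4 := by rw [div_lt_iff₀ hr]; linarith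
  linarith

theorem vaidya_upper_barrier_general (v₀ a : ℝ)
    (m : ℝ → ℝ) (hm : ContDiff ℝ 1 m)
    (hm' : ∀ s ∈ Set.Ioo a v₀, deriv m s ≤ 1 / 16)
    (r : ℝ → ℝ)
    (hpos : ∀ s ∈ Set.Ioc a v₀, 0 < r s)
    (hode : ∀ s ∈ Set.Ioc a v₀,
      HasDerivWithinAt r (1 / 2 - m s / r s) (Set.Ioc a v₀) s)
    (hinit : r v₀ ≤ 4 * m v₀) :
    ∀ s ∈ Set.Ioc a v₀, r s ≤ 4 * m s := by
  intro s hs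
  set f : ℝ → ℝ := fun x => r x - 4 * m x
  have hf_deriv : ∀ x ∈ Ioo a v₀, HasDerivAt f (1 / 2 - m x / r x - 4 * deriv m x) x :=
    fun x hx => ((hode x (Ioo_subset_Ioc_self hx)).hasDerivAt
      (mem_of_superset (isOpen_Ioo.mem_nhds hx) Ioo_subset_Ioc_self)).sub
      ((hm.differentiable one_ne_zero x).hasDerivAt.const_mul 4)
  have hsub : Ioo s v₀ ⊆ Ioo a v₀ := Ioo_subset_Ioo_left hs.1.le
  have hf_cont : ContinuousOn f (Icc s v₀) := fun x hx =>
    have hx' : x ∈ Ioc a v₀ := ⟨hs.1.trans_le hx.1, hx.2⟩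
    ((hode x hx').continuousWithinAt.sub
      (hm.continuous.continuousWithinAt.const_mul 4)).mono
      fun y hy => ⟨hs.1.trans_le hy.1, hy.2⟩
  suffices f s ≤ 0 from sub_nonpos.1 this
  refine nonpos_of_nonpos_right_of_deriv_nonneg_of_pos hs.2 hf_cont
    (fun x hx => (hf_deriv x (hsub hx)).differentiableAt.differentiableWithinAt)
    (fun x hx hfx => ?_) (sub_nonpos.2 hinit)
  have hx := hsub hx
  rw [(hf_deriv x hx).deriv]
  exact (half_sub_div_sub_four_mul_pos (hpos x (Ioo_subset_Ioc_self hx)) (sub_pos.1 hfx)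
    (hm' x hx)).le

/-- Upper barrier comparison for the outgoing radial null geodesic ODE
`r′(s) = 1/2 − m(s)/r(s)` in the Vaidya spacetime: if `m` is `C¹` with `m′ ≤ 1/16` on
`(a, v₀)`, `r > 0` solves the ODE on `(a, v₀]`, and `r(v₀) ≤ 4·m(v₀)`, then
`r(s) ≤ 4·m(s)` on `(a, v₀]`. -/
theorem vaidya_upper_barrier (v₀ a : ℝ) (hv₀ : 0 < v₀) (ha : 0 ≤ a) (hav : a < v₀)
    (m : ℝ → ℝ) (hm : ContDiff ℝ 1 m)
    (hm' : ∀ s ∈ Set.Ioo a v₀, deriv m s ≤ 1 / 16)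
    (r : ℝ → ℝ)
    (hpos : ∀ s ∈ Set.Ioc a v₀, 0 < r s)
    (hode : ∀ s ∈ Set.Ioc a v₀,
      HasDerivWithinAt r (1 / 2 - m s / r s) (Set.Ioc a v₀) s)
    (hinit : r v₀ ≤ 4 * m v₀) :
    ∀ s ∈ Set.Ioc a v₀, r s ≤ 4 * m s :=
  vaidya_upper_barrier_general v₀ a m hm hm' r hpos hode hinit
end

section
/- Let v₀ > 0 and let m : ℝ → ℝ be continuously differentiable and nondecreasing with m(v) = 0 for v ≤ 0, m(v) > 0 for v > 0, and m′(v) ≤ 1/16 for all v ∈ (0, v₀). Suppose r : (0, v₀] → ℝ is differentiable with r(s) > 0, satisfies r′(s) = 1/2 − m(s)/r(s) for all s ∈ (0, v₀], and 2·m(v₀) ≤ r(v₀) ≤ 4·m(v₀). Then 2·m(s) ≤ r(s) ≤ 4·m(s) for all s ∈ (0, v₀], and r(s) → 0 as s → 0⁺. -/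
open Set Filter Topology

/-!
The curves `r = 2m` and `r = 4m` are barriers for the backward flow of `r′ = 1/2 − m/r`: below
`r = k·m` one has `r′ < 1/2 − 1/k`, above it `r′ > 1/2 − 1/k`. So when `k·m′` lies on the
appropriate side of `1/2 − 1/k`, the difference `r − k·m` keeps its strict sign forward in time,
and a solution on the wrong side of `r = k·m` at some `s < v₀` would still be there at `v₀`. For `k = 2` the condition is `m′ ≥ 0`, for `k = 4` it is `m′ ≤ 1/16`. Squeezed
between `0` and `4m`, the solution then tends to `m(0) = 0`.
-/

theorem neg_of_deriv_right_neg_of_neg {f f' : ℝ → ℝ} {a b : ℝ} (hab : a ≤ b)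
    (hf : ContinuousOn f (Icc a b))
    (hf' : ∀ x ∈ Ico a b, HasDerivWithinAt f (f' x) (Ici x) x)
    (hdec : ∀ x ∈ Ico a b, f x < 0 → f' x < 0) (ha : f a < 0) : f b < 0 := by
  have hle : f b ≤ f a :=
    image_le_of_deriv_right_lt_deriv_boundary' hf hf' (B := fun _ => f a) (B' := 0) le_rfl
      continuousOn_const (fun x _ => hasDerivWithinAt_const x _ (f a))
      (fun x hx hfx => hdec x hx (hfx ▸ ha))
      ⟨hab, le_rfl⟩
  exact hle.trans_lt ha

section OutgoingNullRadius

variable {m r : ℝ → ℝ} {v₀ k : ℝ}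

theorem hasDerivAt_sub_const_mul_of_ode (hm : Differentiable ℝ m)
    (hode : ∀ s ∈ Ioc 0 v₀, HasDerivWithinAt r (1 / 2 - m s / r s) (Ioc 0 v₀) s)
    {x : ℝ} (hx : x ∈ Ioo 0 v₀) :
    HasDerivAt (fun t => r t - k * m t) (1 / 2 - m x / r x - k * deriv m x) x :=
  ((hode x (Ioo_subset_Ioc_self hx)).hasDerivAt (Ioc_mem_nhds hx.1 hx.2)).sub
    ((hm x).hasDerivAt.const_mul k)

theorem continuousOn_sub_const_mul_of_ode (hm : Differentiable ℝ m)
    (hode : ∀ s ∈ Ioc 0 v₀, HasDerivWithinAt r (1 / 2 - m s / r s) (Ioc 0 v₀) s)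
    {s : ℝ} (hs : s ∈ Ioc 0 v₀) : ContinuousOn (fun t => r t - k * m t) (Icc s v₀) :=
  fun t ht => ((hode t ⟨hs.1.trans_le ht.1, ht.2⟩).continuousWithinAt.mono
    fun _ hu => ⟨hs.1.trans_le hu.1, hu.2⟩).sub
      (hm.continuous.continuousWithinAt.const_mul k)

theorem const_mul_le_of_ode (hk : 0 < k) (hm : Differentiable ℝ m)
    (hm' : ∀ x ∈ Ioo 0 v₀, 1 / 2 - 1 / k ≤ k * deriv m x)
    (hpos : ∀ s ∈ Ioc 0 v₀, 0 < r s)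
    (hode : ∀ s ∈ Ioc 0 v₀, HasDerivWithinAt r (1 / 2 - m s / r s) (Ioc 0 v₀) s)
    (hend : k * m v₀ ≤ r v₀) : ∀ s ∈ Ioc 0 v₀, k * m s ≤ r s := by
  intro s hs
  by_contra! hlt
  have hsub : Ico s v₀ ⊆ Ioo 0 v₀ := fun x hx => ⟨hs.1.trans_le hx.1, hx.2⟩
  have : r v₀ - k * m v₀ < 0 := by
    refine neg_of_deriv_right_neg_of_neg (f := fun t => r t - k * m t) hs.2
      (continuousOn_sub_const_mul_of_ode hm hode hs)
      (fun x hx => (hasDerivAt_sub_const_mul_of_ode hm hode (hsub hx)).hasDerivWithinAt)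
      (fun x hx hfx => ?_) (by linarith)
    have hrx := hpos x (Ioo_subset_Ioc_self (hsub hx))
    have : 1 / k < m x / r x := by
      rw [div_lt_div_iff₀ hk hrx]
      linarith
    linarith [hm' x (hsub hx)]
  linarith

theorem le_const_mul_of_ode (hk : 0 < k) (hm : Differentiable ℝ m)
    (hm' : ∀ x ∈ Ioo 0 v₀, k * deriv m x ≤ 1 / 2 - 1 / k)
    (hpos : ∀ s ∈ Ioc 0 v₀, 0 < r s)
    (hode : ∀ s ∈ Ioc 0 v₀, HasDerivWithinAt r (1 / 2 - m s / r s) (Ioc 0 v₀) s)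
    (hend : r v₀ ≤ k * m v₀) : ∀ s ∈ Ioc 0 v₀, r s ≤ k * m s := by
  intro s hs
  by_contra! hlt
  have hsub : Ico s v₀ ⊆ Ioo 0 v₀ := fun x hx => ⟨hs.1.trans_le hx.1, hx.2⟩
  have : -(r v₀ - k * m v₀) < 0 := by
    refine neg_of_deriv_right_neg_of_neg (f := fun t => -(r t - k * m t)) hs.2
      (continuousOn_sub_const_mul_of_ode hm hode hs).neg
      (fun x hx => (hasDerivAt_sub_const_mul_of_ode hm hode (hsub hx)).neg.hasDerivWithinAt)
      (fun x hx hfx => ?_) (by linarith)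
    have hrx := hpos x (Ioo_subset_Ioc_self (hsub hx))
    have : m x / r x < 1 / k := by
      rw [div_lt_div_iff₀ hrx hk]
      linarith
    linarith [hm' x (hsub hx)]
  linarith

end OutgoingNullRadius

theorem vaidya_naked_singularity_general (v₀ : ℝ) (hv₀ : 0 < v₀)
    (m : ℝ → ℝ) (hm : ContDiff ℝ 1 m) (hmono : Monotone m)
    (hm0 : ∀ v : ℝ, v ≤ 0 → m v = 0)
    (hm' : ∀ v ∈ Set.Ioo (0 : ℝ) v₀, deriv m v ≤ 1 / 16)
    (r : ℝ → ℝ)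
    (hpos : ∀ s ∈ Set.Ioc (0 : ℝ) v₀, 0 < r s)
    (hode : ∀ s ∈ Set.Ioc (0 : ℝ) v₀,
      HasDerivWithinAt r (1 / 2 - m s / r s) (Set.Ioc (0 : ℝ) v₀) s)
    (hlow : 2 * m v₀ ≤ r v₀) (hhigh : r v₀ ≤ 4 * m v₀) :
    (∀ s ∈ Set.Ioc (0 : ℝ) v₀, 2 * m s ≤ r s ∧ r s ≤ 4 * m s) ∧
      Tendsto r (nhdsWithin 0 (Set.Ioi 0)) (𝓝 0) := by
  have hmd : Differentiable ℝ m := hm.differentiable one_ne_zero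
  have hlower := const_mul_le_of_ode two_pos hmd
    (fun x _ => by linarith [hmono.deriv_nonneg (x := x)]) hpos hode hlow
  have hupper := le_const_mul_of_ode four_pos hmd
    (fun x hx => by linarith [hm' x hx]) hpos hode hhigh
  refine ⟨fun s hs => ⟨hlower s hs, hupper s hs⟩, ?_⟩
  have hm4 : Tendsto (fun s => 4 * m s) (𝓝[>] 0) (𝓝 0) := by
    simpa [hm0 0 le_rfl] using
      ((hmd.continuous.tendsto 0).mono_left nhdsWithin_le_nhds).const_mul 4
  have hIoc : Ioc 0 v₀ ∈ 𝓝[>] (0 : ℝ) := Ioc_mem_nhdsGT hv₀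
  exact tendsto_of_tendsto_of_tendsto_of_le_of_le' tendsto_const_nhds hm4
    (eventually_of_mem hIoc fun s hs => (hpos s hs).le)
    (eventually_of_mem hIoc hupper)

/-- Naked singularities in Vaidya spacetimes: if `m` is `C¹`, nondecreasing, vanishes for
`v ≤ 0`, is positive for `v > 0` and satisfies `m′ ≤ 1/16` on `(0, v₀)`, then any positive
solution `r` of `r′(s) = 1/2 − m(s)/r(s)` on `(0, v₀]` with `2·m(v₀) ≤ r(v₀) ≤ 4·m(v₀)`
satisfies `2·m(s) ≤ r(s) ≤ 4·m(s)` throughout and `r(s) → 0` as `s → 0⁺`. -/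
theorem vaidya_naked_singularity (v₀ : ℝ) (hv₀ : 0 < v₀)
    (m : ℝ → ℝ) (hm : ContDiff ℝ 1 m) (hmono : Monotone m)
    (hm0 : ∀ v : ℝ, v ≤ 0 → m v = 0) (hmpos : ∀ v : ℝ, 0 < v → 0 < m v)
    (hm' : ∀ v ∈ Set.Ioo (0 : ℝ) v₀, deriv m v ≤ 1 / 16)
    (r : ℝ → ℝ)
    (hpos : ∀ s ∈ Set.Ioc (0 : ℝ) v₀, 0 < r s)
    (hode : ∀ s ∈ Set.Ioc (0 : ℝ) v₀,
      HasDerivWithinAt r (1 / 2 - m s / r s) (Set.Ioc (0 : ℝ) v₀) s)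
    (hlow : 2 * m v₀ ≤ r v₀) (hhigh : r v₀ ≤ 4 * m v₀) :
    (∀ s ∈ Set.Ioc (0 : ℝ) v₀, 2 * m s ≤ r s ∧ r s ≤ 4 * m s) ∧
      Tendsto r (nhdsWithin 0 (Set.Ioi 0)) (𝓝 0) :=
  vaidya_naked_singularity_general v₀ hv₀ m hm hmono hm0 hm' r hpos hode hlow hhigh
end
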